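/- arXiv:0711.2798 — 5 statements merged into one kernel-verified Lean document; each statement's English description precedes it below -/
import Mathlib

section
/- On an almost hypercomplex pseudo-Hermitian manifold, the structural tensors satisfy the relation F1(x,y,z) = F2(x,J3y,z) + F3(x,y,J2z), and cyclically F2(x,y,z) = F3(x,J1y,z) + F1(x,y,J3z), F3(x,y,z) = F1(x,J2y,z) - F2(x,y,J1z). -/
/-- The structural tensors of an almost hypercomplex pseudo-Hermitian manifold
(formulated algebraically for a module of vector fields, with a metric-compatible
connection and constant metric coefficients) satisfy
`F1(x,y,z) = F2(x,J3y,z) + F3(x,y,J2z)` and its cyclic analogues. -/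
theorem stmt12 (V : Type*) [AddCommGroup V] [Module ℝ V]
    (g : V →ₗ[ℝ] V →ₗ[ℝ] ℝ) (hsym : ∀ x y, g x y = g y x)
    (nabla : V → V →ₗ[ℝ] V)
    (hcompat : ∀ x y z, g (nabla x y) z + g y (nabla x z) = 0)
    (J1 J2 J3 : Module.End ℝ V)
    (h1 : ∀ x, J1 (J1 x) = -x) (h2 : ∀ x, J2 (J2 x) = -x) (h3 : ∀ x, J3 (J3 x) = -x)
    (h12 : ∀ x, J1 (J2 x) = J3 x) (h21 : ∀ x, J2 (J1 x) = -J3 x)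
    (hg1 : ∀ x y, g (J1 x) (J1 y) = g x y)
    (hg2 : ∀ x y, g (J2 x) (J2 y) = -g x y)
    (hg3 : ∀ x y, g (J3 x) (J3 y) = -g x y)
    (F1 F2 F3 : V → V → V → ℝ)
    (hF1 : ∀ x y z, F1 x y z = g (nabla x (J1 y) - J1 (nabla x y)) z)
    (hF2 : ∀ x y z, F2 x y z = g (nabla x (J2 y) - J2 (nabla x y)) z)
    (hF3 : ∀ x y z, F3 x y z = g (nabla x (J3 y) - J3 (nabla x y)) z) :
    (∀ x y z, F1 x y z = F2 x (J3 y) z + F3 x y (J2 z)) ∧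
    (∀ x y z, F2 x y z = F3 x (J1 y) z + F1 x y (J3 z)) ∧
    (∀ x y z, F3 x y z = F1 x (J2 y) z - F2 x y (J1 z)) := by
  have j23 : ∀ x, J2 (J3 x) = J1 x := by
    intro x
    rw [← h12 x, h21, ← h12 (J2 x), h2, map_neg, neg_neg]
  have j31 : ∀ x, J3 (J1 x) = J2 x := by
    intro x
    rw [← h12 (J1 x), h21, map_neg, ← h12 x, h1, neg_neg]
  have gJ1 : ∀ a b, g a (J1 b) = -g (J1 a) b := by
    intro a b
    have h := hg1 a (J1 b)
    rw [h1, map_neg] at h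
    linarith
  have gJ2 : ∀ a b, g a (J2 b) = g (J2 a) b := by
    intro a b
    have h := hg2 a (J2 b)
    rw [h2, map_neg] at h
    linarith
  have gJ3 : ∀ a b, g a (J3 b) = g (J3 a) b := by
    intro a b
    have h := hg3 a (J3 b)
    rw [h3, map_neg] at h
    linarith
  refine ⟨?_, ?_, ?_⟩
  · intro x y z
    rw [hF1, hF2, hF3, j23]
    simp only [map_sub, LinearMap.sub_apply, gJ2, map_sub, j23]
    ring
  · intro x y z
    rw [hF2, hF3, hF1, j31]
    simp only [map_sub, LinearMap.sub_apply, gJ3, map_sub, j31]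
    ring
  · intro x y z
    rw [hF3, hF1, hF2, h12]
    simp only [map_sub, LinearMap.sub_apply, gJ1, map_sub, h12]
    ring
end

section
/- The bracket relations [X1,X3] = λ2X2 + λ4X4, [X2,X4] = λ1X1 + λ3X3, [X2,X3] = -λ2X1 - λ3X4, [X3,X4] = -λ4X1 + λ3X2, [X4,X1] = λ1X2 + λ4X3, [X2,X1] = -λ2X3 + λ1X4 define a Lie algebra structure on ℝ⁴ (i.e., the Jacobi identity holds) for all real λ1, λ2, λ3, λ4. -/
/-- The bracket of the 4-parametric family of Lie algebras on `ℝ⁴`, extended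
bilinearly from `[X1,X3]=λ2X2+λ4X4`, `[X2,X4]=λ1X1+λ3X3`, `[X2,X3]=-λ2X1-λ3X4`,
`[X3,X4]=-λ4X1+λ3X2`, `[X4,X1]=λ1X2+λ4X3`, `[X2,X1]=-λ2X3+λ1X4`. -/
def lieBr (l1 l2 l3 l4 : ℝ) (x y : Fin 4 → ℝ) : Fin 4 → ℝ :=
  let p : Fin 4 → Fin 4 → ℝ := fun i j => x i * y j - x j * y i
  ![-l2 * p 1 2 + l1 * p 1 3 - l4 * p 2 3,
    l2 * p 0 2 - l1 * p 0 3 + l3 * p 2 3,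
    l2 * p 0 1 - l4 * p 0 3 + l3 * p 1 3,
    -l1 * p 0 1 + l4 * p 0 2 - l3 * p 1 2]

/-- The pseudo-Riemannian metric `g = diag(1,1,-1,-1)` in the basis `{X1,…,X4}`. -/
def gm (x y : Fin 4 → ℝ) : ℝ :=
  x 0 * y 0 + x 1 * y 1 - x 2 * y 2 - x 3 * y 3

/-- The basis vectors `X1, X2, X3, X4` of `ℝ⁴`. -/
def bX (i : Fin 4) : Fin 4 → ℝ := Pi.single i 1

/-- The signs `gⁱⁱ` of the (diagonal) metric. -/
def eps : Fin 4 → ℝ := ![1, 1, -1, -1]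

/-- The given bracket relations define a Lie algebra structure on `ℝ⁴` for all
real `λ1, λ2, λ3, λ4`: the bracket is antisymmetric and the Jacobi identity holds. -/
theorem stmt14 (l1 l2 l3 l4 : ℝ) :
    (∀ x y : Fin 4 → ℝ, lieBr l1 l2 l3 l4 x y = -lieBr l1 l2 l3 l4 y x) ∧
    (∀ x y z : Fin 4 → ℝ,
      lieBr l1 l2 l3 l4 (lieBr l1 l2 l3 l4 x y) z
        + lieBr l1 l2 l3 l4 (lieBr l1 l2 l3 l4 y z) x
        + lieBr l1 l2 l3 l4 (lieBr l1 l2 l3 l4 z x) y = 0) := by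
  constructor
  · intro x y
    funext i
    fin_cases i <;> simp [lieBr] <;> ring
  · intro x y z
    funext i
    fin_cases i <;> simp [lieBr] <;> ring
end

section
/- For the left-invariant metric on the 4-parameter Lie group with bi-invariance property g([X,Y],Z) = -g([X,Z],Y), the Levi-Civita connection satisfies ∇_{Xi}Xj = (1/2)[Xi,Xj] for all basis vectors, and the scalar curvature equals τ = -(3/2)(λ1² + λ2² - λ3² - λ4²). -/
noncomputable section

/-- The Levi-Civita connection `∇ₓy = ½[x,y]` of the left-invariant metric. -/
def nab (l1 l2 l3 l4 : ℝ) (x y : Fin 4 → ℝ) : Fin 4 → ℝ :=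
  (1 / 2 : ℝ) • lieBr l1 l2 l3 l4 x y

/-- The curvature `R(x,y)z = ∇ₓ∇_y z - ∇_y∇ₓ z - ∇_{[x,y]} z`. -/
def curv (l1 l2 l3 l4 : ℝ) (x y z : Fin 4 → ℝ) : Fin 4 → ℝ :=
  nab l1 l2 l3 l4 x (nab l1 l2 l3 l4 y z) - nab l1 l2 l3 l4 y (nab l1 l2 l3 l4 x z)
    - nab l1 l2 l3 l4 (lieBr l1 l2 l3 l4 x y) z

lemma bX0 : bX 0 = ![1,0,0,0] := by ext j; fin_cases j <;> simp [bX]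
lemma bX1 : bX 1 = ![0,1,0,0] := by ext j; fin_cases j <;> simp [bX]
lemma bX2 : bX 2 = ![0,0,1,0] := by ext j; fin_cases j <;> simp [bX]
lemma bX3 : bX 3 = ![0,0,0,1] := by ext j; fin_cases j <;> simp [bX]

set_option maxHeartbeats 4000000 in
/-- `∇ = ½[·,·]` satisfies the Koszul formula (so it is the Levi-Civita
connection of the left-invariant metric), and the scalar curvature equals
`τ = -(3/2)(λ1² + λ2² - λ3² - λ4²)`. -/
theorem stmt16 (l1 l2 l3 l4 : ℝ) :
    (∀ x y z : Fin 4 → ℝ,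
      2 * gm (nab l1 l2 l3 l4 x y) z
        = gm (lieBr l1 l2 l3 l4 x y) z - gm (lieBr l1 l2 l3 l4 y z) x
          + gm (lieBr l1 l2 l3 l4 z x) y) ∧
    (∑ i : Fin 4, ∑ j : Fin 4,
        eps i * eps j * gm (curv l1 l2 l3 l4 (bX i) (bX j) (bX j)) (bX i))
      = -(3 / 2) * (l1 ^ 2 + l2 ^ 2 - l3 ^ 2 - l4 ^ 2) := by
  constructor
  · intro x y z
    simp only [nab, gm, lieBr, smul_eq_mul, Pi.smul_apply, Matrix.cons_val_zero,
      Matrix.cons_val_one, Matrix.head_cons, Matrix.cons_val_two, Matrix.tail_cons,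
      Matrix.cons_val_three]
    ring
  · simp only [Fin.sum_univ_four, eps, curv, nab, gm, lieBr, bX0, bX1, bX2, bX3,
      Pi.sub_apply,
      Pi.smul_apply, smul_eq_mul, Matrix.cons_val_zero,
      Matrix.cons_val_one, Matrix.head_cons, Matrix.cons_val_two, Matrix.tail_cons,
      Matrix.cons_val_three]
    norm_num
    ring
end
end

section
/- For the 4-parameter Lie group manifold (L,H,G), the square norms of the covariant derivatives of the three almost complex structures satisfy -2‖∇J1‖² = ‖∇J2‖² = ‖∇J3‖² = 4(λ1² + λ2² - λ3² - λ4²); in particular ‖∇J_α‖² = 0 for one α implies ‖∇J_α‖² = 0 for all α. -/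
noncomputable section

/-- `J1 X1 = X2, J1 X2 = -X1, J1 X3 = -X4, J1 X4 = X3`. -/
def Jone (x : Fin 4 → ℝ) : Fin 4 → ℝ := ![-x 1, x 0, x 3, -x 2]

/-- `J2 X1 = X3, J2 X2 = X4, J2 X3 = -X1, J2 X4 = -X2`. -/
def Jtwo (x : Fin 4 → ℝ) : Fin 4 → ℝ := ![-x 2, -x 3, x 0, x 1]

/-- `J3 = J1 ∘ J2`. -/
def Jthree (x : Fin 4 → ℝ) : Fin 4 → ℝ := Jone (Jtwo x)

/-- `(∇ₓ Jα) y = ∇ₓ(Jα y) - Jα(∇ₓ y)`. -/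
def covJ (l1 l2 l3 l4 : ℝ) (J : (Fin 4 → ℝ) → (Fin 4 → ℝ)) (x y : Fin 4 → ℝ) :
    Fin 4 → ℝ :=
  nab l1 l2 l3 l4 x (J y) - J (nab l1 l2 l3 l4 x y)

/-- The square norm `‖∇Jα‖² = gⁱʲ gᵏˡ g((∇ᵢJα)Xₖ, (∇ⱼJα)Xₗ)`. -/
def normCovJ (l1 l2 l3 l4 : ℝ) (J : (Fin 4 → ℝ) → (Fin 4 → ℝ)) : ℝ :=
  ∑ i : Fin 4, ∑ k : Fin 4, eps i * eps k *
    gm (covJ l1 l2 l3 l4 J (bX i) (bX k)) (covJ l1 l2 l3 l4 J (bX i) (bX k))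

set_option maxHeartbeats 2000000 in
lemma h1 (l1 l2 l3 l4 : ℝ) :
    normCovJ l1 l2 l3 l4 Jone = -2 * (l1 ^ 2 + l2 ^ 2 - l3 ^ 2 - l4 ^ 2) := by
  simp only [normCovJ, covJ, nab, Jone, lieBr, gm, eps, Fin.sum_univ_four,
    bX0, bX1, bX2, bX3, Pi.sub_apply, Pi.smul_apply, smul_eq_mul,
    Matrix.cons_val_zero, Matrix.cons_val_one, Matrix.head_cons,
    Matrix.cons_val_two, Matrix.tail_cons, Matrix.cons_val_three, Matrix.head_fin_const]
  ring

set_option maxHeartbeats 2000000 in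
lemma h2 (l1 l2 l3 l4 : ℝ) :
    normCovJ l1 l2 l3 l4 Jtwo = 4 * (l1 ^ 2 + l2 ^ 2 - l3 ^ 2 - l4 ^ 2) := by
  simp only [normCovJ, covJ, nab, Jtwo, lieBr, gm, eps, Fin.sum_univ_four,
    bX0, bX1, bX2, bX3, Pi.sub_apply, Pi.smul_apply, smul_eq_mul,
    Matrix.cons_val_zero, Matrix.cons_val_one, Matrix.head_cons,
    Matrix.cons_val_two, Matrix.tail_cons, Matrix.cons_val_three, Matrix.head_fin_const]
  ring

set_option maxHeartbeats 2000000 in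
lemma h3 (l1 l2 l3 l4 : ℝ) :
    normCovJ l1 l2 l3 l4 Jthree = 4 * (l1 ^ 2 + l2 ^ 2 - l3 ^ 2 - l4 ^ 2) := by
  simp only [normCovJ, covJ, nab, Jthree, Jone, Jtwo, lieBr, gm, eps, Fin.sum_univ_four,
    bX0, bX1, bX2, bX3, Pi.sub_apply, Pi.smul_apply, smul_eq_mul,
    Matrix.cons_val_zero, Matrix.cons_val_one, Matrix.head_cons,
    Matrix.cons_val_two, Matrix.tail_cons, Matrix.cons_val_three, Matrix.head_fin_const]
  ring

/-- `-2‖∇J1‖² = ‖∇J2‖² = ‖∇J3‖² = 4(λ1² + λ2² - λ3² - λ4²)`; in particular, if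
one of the square norms vanishes then all of them vanish. -/
theorem stmt17 (l1 l2 l3 l4 : ℝ) :
    (-2 * normCovJ l1 l2 l3 l4 Jone = 4 * (l1 ^ 2 + l2 ^ 2 - l3 ^ 2 - l4 ^ 2)) ∧
    (normCovJ l1 l2 l3 l4 Jtwo = 4 * (l1 ^ 2 + l2 ^ 2 - l3 ^ 2 - l4 ^ 2)) ∧
    (normCovJ l1 l2 l3 l4 Jthree = 4 * (l1 ^ 2 + l2 ^ 2 - l3 ^ 2 - l4 ^ 2)) ∧
    ((normCovJ l1 l2 l3 l4 Jone = 0 ∨ normCovJ l1 l2 l3 l4 Jtwo = 0 ∨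
        normCovJ l1 l2 l3 l4 Jthree = 0) →
      (normCovJ l1 l2 l3 l4 Jone = 0 ∧ normCovJ l1 l2 l3 l4 Jtwo = 0 ∧
        normCovJ l1 l2 l3 l4 Jthree = 0)) := by
  refine ⟨by rw [h1 l1 l2 l3 l4]; ring, h2 l1 l2 l3 l4, h3 l1 l2 l3 l4, ?_⟩
  rintro (h | h | h) <;>
    refine ⟨?_, ?_, ?_⟩ <;>
    nlinarith [h1 l1 l2 l3 l4, h2 l1 l2 l3 l4, h3 l1 l2 l3 l4]
end
end

section
/- For the 4-parameter Lie group manifold, the Lee form θ1 of F1 has components (θ1)1 = -λ4, (θ1)2 = λ3, (θ1)3 = -λ2, (θ1)4 = λ1, and its exterior derivative satisfies dθ1(X1,X2) = λ1² + λ2², so θ1 is not closed whenever (λ1,λ2,λ3,λ4) ≠ 0 with λ1²+λ2² ≠ 0. -/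
noncomputable section

/-- The structural tensor `F1(x,y,z) = g((∇ₓJ1)y, z)`. -/
def Fone (l1 l2 l3 l4 : ℝ) (x y z : Fin 4 → ℝ) : ℝ :=
  gm (covJ l1 l2 l3 l4 Jone x y) z

/-- The Lee form `θ1(z) = gⁱʲ F1(Xi, Xj, z)`. -/
def theta1 (l1 l2 l3 l4 : ℝ) (z : Fin 4 → ℝ) : ℝ :=
  ∑ i : Fin 4, eps i * Fone l1 l2 l3 l4 (bX i) (bX i) z

def leeVector1 (l1 l2 l3 l4 : ℝ) : Fin 4 → ℝ :=
  ∑ i : Fin 4, eps i • covJ l1 l2 l3 l4 Jone (bX i) (bX i)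

theorem theta1_eq_gm_leeVector1 (l1 l2 l3 l4 : ℝ) (z : Fin 4 → ℝ) :
    theta1 l1 l2 l3 l4 z = gm (leeVector1 l1 l2 l3 l4) z := by
  simp only [theta1, Fone, leeVector1, gm, Finset.sum_apply, Pi.smul_apply, smul_eq_mul,
    Finset.sum_mul, ← Finset.sum_add_distrib, ← Finset.sum_sub_distrib]
  exact Finset.sum_congr rfl fun i _ => by ring

theorem leeVector1_eq (l1 l2 l3 l4 : ℝ) : leeVector1 l1 l2 l3 l4 = ![-l4, l3, l2, -l1] := by
  ext j
  fin_cases j <;>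
  · simp [leeVector1, covJ, nab, lieBr, Jone, bX, eps, Fin.sum_univ_four, Pi.single_apply]
    ring

theorem theta1_apply (l1 l2 l3 l4 : ℝ) (z : Fin 4 → ℝ) :
    theta1 l1 l2 l3 l4 z = -l4 * z 0 + l3 * z 1 - l2 * z 2 + l1 * z 3 := by
  rw [theta1_eq_gm_leeVector1, leeVector1_eq, gm]
  simp only [Matrix.cons_val]
  ring

theorem lieBr_bX_zero_one (l1 l2 l3 l4 : ℝ) :
    lieBr l1 l2 l3 l4 (bX 0) (bX 1) = ![0, 0, l2, -l1] := by
  ext j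
  fin_cases j <;> simp [lieBr, bX]

/-- The Lee form `θ1` has components `(-λ4, λ3, -λ2, λ1)`, its exterior derivative
satisfies `dθ1(X1,X2) = λ1² + λ2²` (where `dθ(X,Y) = -θ([X,Y])`), so `θ1` is not
closed whenever `λ1² + λ2² ≠ 0`. -/
theorem stmt18 (l1 l2 l3 l4 : ℝ) :
    theta1 l1 l2 l3 l4 (bX 0) = -l4 ∧
    theta1 l1 l2 l3 l4 (bX 1) = l3 ∧
    theta1 l1 l2 l3 l4 (bX 2) = -l2 ∧
    theta1 l1 l2 l3 l4 (bX 3) = l1 ∧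
    -theta1 l1 l2 l3 l4 (lieBr l1 l2 l3 l4 (bX 0) (bX 1)) = l1 ^ 2 + l2 ^ 2 ∧
    (l1 ^ 2 + l2 ^ 2 ≠ 0 →
      -theta1 l1 l2 l3 l4 (lieBr l1 l2 l3 l4 (bX 0) (bX 1)) ≠ 0) := by
  have hdθ : -theta1 l1 l2 l3 l4 (lieBr l1 l2 l3 l4 (bX 0) (bX 1)) = l1 ^ 2 + l2 ^ 2 := by
    rw [lieBr_bX_zero_one, theta1_apply]
    simp only [Matrix.cons_val]
    ring
  refine ⟨?_, ?_, ?_, ?_, hdθ, fun h => hdθ.trans_ne h⟩ <;>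
  · rw [theta1_apply]
    simp [bX]
end
end
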